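/- arXiv:1008.0731 — 3 statements merged into one kernel-verified Lean document; each statement's English description precedes it below -/
import Mathlib

section
/- If f is a monic polynomial with integer coefficients and nonzero constant term, having a simple real root θ > 1 such that every other complex root of f has modulus strictly less than 1, then f is irreducible over the rationals. -/
/-!
By Gauss's lemma it suffices to show that in every factorization `f = g * h` into monic integer
polynomials one factor is constant. As `θ` is a simple root, one factor `q` does not vanish at
`θ`, so all complex roots of `q` lie in the open unit disc. By Vieta `|q(0)|` is the product of
their moduli, hence `< 1` unless `q` is constant; but `q(0)` is a nonzero integer, since it
divides `f(0) ≠ 0`.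
-/

open Polynomial

namespace Polynomial

theorem not_isRoot_or_not_isRoot_of_rootMultiplicity_mul_eq_one {R : Type*} [CommRing R]
    [IsDomain R] {p q : R[X]} {a : R} (h : (p * q).rootMultiplicity a = 1) :
    ¬ p.IsRoot a ∨ ¬ q.IsRoot a := by
  have hpq : p * q ≠ 0 := by
    intro hpq
    simp [hpq] at h
  rw [rootMultiplicity_mul hpq] at h
  by_contra! hroots
  have hp := (rootMultiplicity_pos (left_ne_zero_of_mul hpq)).mpr hroots.1
  have hq := (rootMultiplicity_pos (right_ne_zero_of_mul hpq)).mpr hroots.2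
  omega

theorem Monic.exists_one_le_norm_mem_roots {p : ℂ[X]} (hp : p.Monic) (hdeg : p.natDegree ≠ 0)
    (h0 : 1 ≤ ‖p.coeff 0‖) : ∃ z ∈ p.roots, 1 ≤ ‖z‖ := by
  by_contra! hdisc
  have hsplit : p.Splits := IsAlgClosed.splits p
  have hroots : p.roots ≠ 0 := by
    rwa [← Multiset.card_pos, pos_iff_ne_zero, ← hsplit.natDegree_eq_card_roots]
  have hpos : ∀ z ∈ p.roots, 0 < ‖z‖ := by
    intro z hz
    refine norm_pos_iff.mpr fun hz0 => ?_
    rw [hz0, mem_roots hp.ne_zero, IsRoot, ← coeff_zero_eq_eval_zero] at hz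
    norm_num [hz] at h0
  have hnorm : ‖p.coeff 0‖ = (p.roots.map norm).prod := by
    rw [hsplit.coeff_zero_eq_prod_roots_of_monic hp, norm_mul, norm_pow, norm_neg, norm_one,
      one_pow, one_mul]
    exact map_multiset_prod (normHom : ℂ →*₀ ℝ) p.roots
  have hlt := Multiset.prod_map_lt_prod_map hroots norm (fun _ => 1) hpos hdisc
  simp only [Multiset.map_const', Multiset.prod_replicate, one_pow] at hlt
  linarith

theorem Monic.natDegree_eq_zero_of_norm_lt_one {q : ℤ[X]} (hq : q.Monic) (hq0 : q.coeff 0 ≠ 0)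
    (hroots : ∀ z : ℂ, aeval z q = 0 → ‖z‖ < 1) : q.natDegree = 0 := by
  by_contra hdeg
  obtain ⟨z, hz, hz1⟩ := (hq.map (algebraMap ℤ ℂ)).exists_one_le_norm_mem_roots
    (by rwa [hq.natDegree_map])
    (by simpa [coeff_map] using (Int.cast_le (R := ℝ)).mpr (Int.one_le_abs hq0))
  rw [mem_roots (hq.map _).ne_zero, IsRoot, eval_map_algebraMap] at hz
  exact (hroots z hz).not_ge hz1

end Polynomial

theorem stmt_0_general (f : Polynomial ℤ) (hmonic : f.Monic) (hconst : f.coeff 0 ≠ 0)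
    (θ : ℝ)
    (hsimple : (f.map (Int.castRingHom ℂ)).rootMultiplicity (θ : ℂ) = 1)
    (hsmall : ∀ z : ℂ, Polynomial.aeval z f = 0 → z ≠ (θ : ℂ) → ‖z‖ < 1) :
    Irreducible (f.map (Int.castRingHom ℚ)) := by
  rw [← algebraMap_int_eq] at hsimple ⊢
  rw [← hmonic.irreducible_iff_irreducible_map_fraction_map, hmonic.irreducible_iff_natDegree]
  have hfactor : ∀ q r : ℤ[X], q.Monic → q * r = f → ¬ (q.map (algebraMap ℤ ℂ)).IsRoot θ →
      q.natDegree = 0 := by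
    intro q r hq hqr hqθ
    refine hq.natDegree_eq_zero_of_norm_lt_one (left_ne_zero_of_mul (b := r.coeff 0) ?_) ?_
    · rwa [← mul_coeff_zero, hqr]
    · intro z hz
      refine hsmall z (by rw [← hqr, map_mul, hz, zero_mul]) ?_
      rintro rfl
      exact hqθ (by rwa [IsRoot, eval_map_algebraMap])
  refine ⟨?_, fun g h hg hh hgh => ?_⟩
  · rintro rfl
    rw [Polynomial.map_one, ← C_1, rootMultiplicity_C] at hsimple
    exact zero_ne_one hsimple
  · rw [← hgh, Polynomial.map_mul] at hsimple
    rcases not_isRoot_or_not_isRoot_of_rootMultiplicity_mul_eq_one hsimple with hgθ | hhθ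
    · exact .inl (hfactor g h hg hgh hgθ)
    · exact .inr (hfactor h g hh (by rw [mul_comm, hgh]) hhθ)

theorem stmt_0 (f : Polynomial ℤ) (hmonic : f.Monic) (hconst : f.coeff 0 ≠ 0)
    (θ : ℝ) (hθ : 1 < θ)
    (hroot : Polynomial.aeval (θ : ℂ) f = 0)
    (hsimple : (f.map (Int.castRingHom ℂ)).rootMultiplicity (θ : ℂ) = 1)
    (hsmall : ∀ z : ℂ, Polynomial.aeval z f = 0 → z ≠ (θ : ℂ) → ‖z‖ < 1) :
    Irreducible (f.map (Int.castRingHom ℚ)) :=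
  stmt_0_general f hmonic hconst θ hsimple hsmall
end

section
/- The polynomial L(z) = z^{10} + z^9 − z^7 − z^6 − z^5 − z^4 − z^3 + z + 1 (Lehmer's polynomial) has exactly one real root τ > 1, exactly one real root in (0,1) (namely 1/τ), and all its other eight roots lie on the unit circle. -/
open Polynomial

/-- Lehmer's polynomial, as a polynomial over `ℂ`. -/
noncomputable def LehmerPoly : Polynomial ℂ :=
  X ^ 10 + X ^ 9 - X ^ 7 - X ^ 6 - X ^ 5 - X ^ 4 - X ^ 3 + X + 1

/-! Lehmer's polynomial is palindromic, so `L(z) = z⁵ Q(z + z⁻¹)` with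
`Q(w) = w⁵ + w⁴ - 5w³ - 5w² + 4w + 3`. Sign changes show that `Q` has four real roots in
`(-2, 2)` and one root `w₀ > 2`; as `Q` has degree 5 there are no others. The equation
`z + z⁻¹ = w` has its solutions on the unit circle when `|w| < 2`, and for `w = w₀` its
solutions are a real pair `τ, τ⁻¹` with `τ > 1`. -/

open Set ComplexConjugate

theorem Polynomial.mem_of_isRoot_of_nodup {R : Type*} [CommRing R] [IsDomain R] {p : R[X]}
    (hp : p ≠ 0) {l : List R} (hl : l.Nodup) (hroots : ∀ x ∈ l, p.IsRoot x)
    (hdeg : p.natDegree ≤ l.length) {z : R} (hz : p.IsRoot z) : z ∈ l := by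
  have hle : (l : Multiset R) ≤ p.roots :=
    (Multiset.le_iff_subset (Multiset.coe_nodup.2 hl)).2 fun x hx => (mem_roots hp).2 (hroots x hx)
  have heq := Multiset.eq_of_le_of_card_le hle ((card_roots' p).trans hdeg)
  simpa [← heq] using (mem_roots hp).2 hz

theorem exists_mem_Ioo_eq_zero_of_mul_neg {f : ℝ → ℝ} {a b : ℝ} (hab : a ≤ b)
    (hf : ContinuousOn f (Icc a b)) (h : f a * f b < 0) : ∃ x ∈ Ioo a b, f x = 0 := by
  rcases mul_neg_iff.1 h with ⟨ha, hb⟩ | ⟨ha, hb⟩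
  · exact intermediate_value_Ioo' hab hf ⟨hb, ha⟩
  · exact intermediate_value_Ioo hab hf ⟨ha, hb⟩

theorem eq_or_eq_inv_of_add_inv_eq {K : Type*} [Field K] {z t : K} (hz : z ≠ 0) (ht : t ≠ 0)
    (h : z + z⁻¹ = t + t⁻¹) : z = t ∨ z = t⁻¹ := by
  have : (z - t) * (z - t⁻¹) = 0 := by
    linear_combination z * h + mul_inv_cancel₀ ht - mul_inv_cancel₀ hz
  simpa [sub_eq_zero] using this

theorem exists_one_lt_add_inv_eq {w : ℝ} (hw : 2 < w) : ∃ τ : ℝ, 1 < τ ∧ τ + τ⁻¹ = w := by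
  set s := √(w ^ 2 - 4)
  have hs : s ^ 2 = w ^ 2 - 4 := Real.sq_sqrt (by nlinarith)
  have hτ : 1 < (w + s) / 2 := by linarith [Real.sqrt_nonneg (w ^ 2 - 4)]
  refine ⟨(w + s) / 2, hτ, ?_⟩
  have : w + s ≠ 0 := by linarith
  field_simp
  linear_combination hs

theorem Complex.norm_eq_one_of_add_inv_eq {z : ℂ} {w : ℝ} (hz : z ≠ 0) (h : z + z⁻¹ = w)
    (hw : |w| < 2) : ‖z‖ = 1 := by
  have hq : z ^ 2 - w * z + 1 = 0 := by
    field_simp at h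
    linear_combination h
  have hq' : conj z ^ 2 - w * conj z + 1 = 0 := by
    simpa using congrArg conj hq
  rcases mul_eq_zero.1 (show (z - conj z) * (z + conj z - w) = 0 by
      linear_combination hq - hq') with hreal | htrace
  · -- a real solution would force `w² ≥ 4`
    obtain ⟨x, rfl⟩ := Complex.conj_eq_iff_real.1 (sub_eq_zero.1 hreal).symm
    have : x ^ 2 - w * x + 1 = 0 := by exact_mod_cast hq
    nlinarith [abs_lt.1 hw, sq_nonneg (2 * x - w)]
  · have : (Complex.normSq z : ℂ) = 1 := by
      rw [← Complex.mul_conj]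
      linear_combination -hq + z * htrace
    rw [Complex.norm_def, show Complex.normSq z = 1 by exact_mod_cast this, Real.sqrt_one]

noncomputable def lehmerTrace (R : Type*) [CommRing R] : R[X] :=
  X ^ 5 + X ^ 4 - 5 * X ^ 3 - 5 * X ^ 2 + 4 * X + 3

theorem lehmerTrace_natDegree (R : Type*) [CommRing R] [Nontrivial R] :
    (lehmerTrace R).natDegree = 5 := by
  unfold lehmerTrace
  compute_degree!

theorem lehmerTrace_eval_ofReal (x : ℝ) :
    (lehmerTrace ℂ).eval (x : ℂ) = (lehmerTrace ℝ).eval x := by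
  simp [lehmerTrace]

theorem lehmerPoly_eval_eq {z : ℂ} (hz : z ≠ 0) :
    LehmerPoly.eval z = z ^ 5 * (lehmerTrace ℂ).eval (z + z⁻¹) := by
  simp only [LehmerPoly, lehmerTrace, eval_add, eval_sub, eval_mul, eval_pow, eval_X, eval_one,
    eval_ofNat]
  field_simp
  ring

theorem lehmerPoly_eval_eq_zero_iff {z : ℂ} (hz : z ≠ 0) :
    LehmerPoly.eval z = 0 ↔ (lehmerTrace ℂ).eval (z + z⁻¹) = 0 := by
  rw [lehmerPoly_eval_eq hz, mul_eq_zero, or_iff_right (pow_ne_zero 5 hz)]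

theorem exists_lehmerTrace_roots : ∃ w₀ : ℝ, 2 < w₀ ∧ (lehmerTrace ℝ).eval w₀ = 0 ∧
    ∀ z : ℂ, (lehmerTrace ℂ).eval z = 0 → z = w₀ ∨ ∃ w : ℝ, |w| < 2 ∧ z = w := by
  have root_in (a b : ℝ) (hab : a ≤ b)
      (h : (lehmerTrace ℝ).eval a * (lehmerTrace ℝ).eval b < 0) :
      ∃ x ∈ Ioo a b, (lehmerTrace ℝ).eval x = 0 :=
    exists_mem_Ioo_eq_zero_of_mul_neg hab (lehmerTrace ℝ).continuous.continuousOn h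
  obtain ⟨w₁, ⟨hw₁, hw₁'⟩, h₁⟩ := root_in (-2) (-9 / 5) (by norm_num) (by norm_num [lehmerTrace])
  obtain ⟨w₂, ⟨hw₂, hw₂'⟩, h₂⟩ := root_in (-9 / 5) (-1) (by norm_num) (by norm_num [lehmerTrace])
  obtain ⟨w₃, ⟨hw₃, hw₃'⟩, h₃⟩ := root_in (-1) 0 (by norm_num) (by norm_num [lehmerTrace])
  obtain ⟨w₄, ⟨hw₄, hw₄'⟩, h₄⟩ := root_in 0 1 (by norm_num) (by norm_num [lehmerTrace])
  obtain ⟨w₀, ⟨hw₀, hw₀'⟩, h₀⟩ := root_in 2 3 (by norm_num) (by norm_num [lehmerTrace])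
  refine ⟨w₀, hw₀, h₀, fun z hz => ?_⟩
  have hsorted : [w₁, w₂, w₃, w₄, w₀].Pairwise (· < ·) :=
    List.isChain_iff_pairwise.1 (by simp only [List.isChain_cons_cons, List.isChain_singleton]; grind)
  have hnodup : ([w₁, w₂, w₃, w₄, w₀].map ((↑) : ℝ → ℂ)).Nodup :=
    List.Nodup.map Complex.ofReal_injective (hsorted.imp ne_of_lt)
  have hroots : ∀ x ∈ [w₁, w₂, w₃, w₄, w₀].map ((↑) : ℝ → ℂ), (lehmerTrace ℂ).IsRoot x := by
    simp only [List.mem_map, List.mem_cons, List.not_mem_nil, or_false]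
    rintro _ ⟨w, hw, rfl⟩
    rcases hw with rfl | rfl | rfl | rfl | rfl <;> simp [IsRoot, lehmerTrace_eval_ofReal, *]
  have hne : lehmerTrace ℂ ≠ 0 := fun h => by simpa [h] using lehmerTrace_natDegree ℂ
  have hz' := Polynomial.mem_of_isRoot_of_nodup hne hnodup hroots
    (by simp [lehmerTrace_natDegree]) hz
  simp only [List.mem_map, List.mem_cons, List.not_mem_nil, or_false] at hz'
  obtain ⟨w, hw, rfl⟩ := hz'
  rcases hw with rfl | rfl | rfl | rfl | rfl
  all_goals first | exact .inl rfl | exact .inr ⟨_, abs_lt.2 ⟨by linarith, by linarith⟩, rfl⟩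

theorem exists_lehmerPoly_roots : ∃ τ : ℝ, 1 < τ ∧ LehmerPoly.eval (τ : ℂ) = 0 ∧
    LehmerPoly.eval ((τ⁻¹ : ℝ) : ℂ) = 0 ∧
    ∀ z : ℂ, LehmerPoly.eval z = 0 → z = τ ∨ z = (τ⁻¹ : ℝ) ∨ ‖z‖ = 1 := by
  obtain ⟨w₀, hw₀, hroot, hclass⟩ := exists_lehmerTrace_roots
  obtain ⟨τ, hτ, hsum⟩ := exists_one_lt_add_inv_eq hw₀
  have hτ0 : (τ : ℂ) ≠ 0 := by exact_mod_cast (zero_lt_one.trans hτ).ne'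
  have hsum' : (τ : ℂ) + (τ : ℂ)⁻¹ = w₀ := by exact_mod_cast hsum
  refine ⟨τ, hτ, ?_, ?_, fun z hz => ?_⟩
  · rw [lehmerPoly_eval_eq_zero_iff hτ0, hsum', lehmerTrace_eval_ofReal, hroot,
      Complex.ofReal_zero]
  · rw [Complex.ofReal_inv, lehmerPoly_eval_eq_zero_iff (inv_ne_zero hτ0), inv_inv, add_comm,
      hsum', lehmerTrace_eval_ofReal, hroot, Complex.ofReal_zero]
  have hz0 : z ≠ 0 := by rintro rfl; simp [LehmerPoly] at hz
  rcases hclass _ ((lehmerPoly_eval_eq_zero_iff hz0).1 hz) with h | ⟨w, hw, h⟩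
  · rw [Complex.ofReal_inv]
    exact (eq_or_eq_inv_of_add_inv_eq hz0 hτ0 (h.trans hsum'.symm)).imp_right .inl
  · exact .inr (.inr (Complex.norm_eq_one_of_add_inv_eq hz0 h hw))

theorem stmt_4 :
    ∃ τ : ℝ, 1 < τ ∧ LehmerPoly.eval (τ : ℂ) = 0 ∧
      (∀ x : ℝ, 1 < x → LehmerPoly.eval (x : ℂ) = 0 → x = τ) ∧
      LehmerPoly.eval ((τ⁻¹ : ℝ) : ℂ) = 0 ∧
      (∀ x : ℝ, 0 < x → x < 1 → LehmerPoly.eval (x : ℂ) = 0 → x = τ⁻¹) ∧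
      (∀ z : ℂ, LehmerPoly.eval z = 0 → z ≠ (τ : ℂ) → z ≠ ((τ⁻¹ : ℝ) : ℂ) →
        ‖z‖ = 1) := by
  obtain ⟨τ, hτ, hroot, hroot_inv, hclass⟩ := exists_lehmerPoly_roots
  have hτ_inv : τ⁻¹ < 1 := inv_lt_one_of_one_lt₀ hτ
  have real_cases (x : ℝ) (hx : LehmerPoly.eval (x : ℂ) = 0) : x = τ ∨ x = τ⁻¹ ∨ |x| = 1 := by
    simpa only [Complex.ofReal_inj, Complex.norm_real, Real.norm_eq_abs] using hclass x hx
  refine ⟨τ, hτ, hroot, fun x hx hxroot => ?_, hroot_inv, fun x hx₀ hx₁ hxroot => ?_,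
    fun z hz hτz hτz' => (hclass z hz).resolve_left hτz |>.resolve_left hτz'⟩
  · rcases real_cases x hxroot with h | h | h
    · exact h
    · linarith
    · linarith [le_abs_self x]
  · rcases real_cases x hxroot with h | h | h
    · linarith
    · exact h
    · linarith [abs_of_pos hx₀]
end

section
/- Let A be the minimal polynomial of a Pisot number θ, of degree d, with constant coefficient a₀ and coefficients a₁, a_{d−1} of z and z^{d−1} respectively. If A is not reciprocal and a₀ = 1, then a_{d−1} ≠ a₁. -/
open Polynomial

/-- A Pisot number: a real algebraic integer `θ > 1` all of whose other conjugates
have modulus strictly less than 1. -/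
def IsPisot (θ : ℝ) : Prop :=
  1 < θ ∧ IsIntegral ℤ θ ∧
    ∀ z : ℂ, Polynomial.aeval z (minpoly ℚ θ) = 0 → z ≠ (θ : ℂ) → ‖z‖ < 1

open Metric Set ComplexConjugate

/-!
Write `A* = reflect d A`. The hypotheses `a₀ = 1` and `a_{d-1} = a₁` say that `A` and `A*` agree
to first order at `0`. Since `A` is real, `|A| = |A*|` on the unit circle, and `A*` has exactly
one zero `r = 1/θ` in the closed unit disc, a simple one: `A* = (z - r) S` with `S` zero-free
there. Then `g = A / ((1 - r z) S)` is holomorphic on the closed disc, unimodular on its boundary,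
and `g 0 = -r`, `g' 0 = 1 - r²`. This is the equality case of the Schwarz–Pick lemma, so `g` is
the Blaschke factor `(z - r) / (1 - r z)`, that is, `A = A*`.
-/

namespace Complex

noncomputable def blaschke (a z : ℂ) : ℂ := (z - a) / (1 - conj a * z)

@[simp]
lemma blaschke_self (a : ℂ) : blaschke a a = 0 := by simp [blaschke]

lemma normSq_one_sub_conj_mul_sub_normSq_sub (a z : ℂ) :
    normSq (1 - conj a * z) - normSq (z - a) = (1 - normSq a) * (1 - normSq z) := by
  simp only [normSq_apply, sub_re, sub_im, mul_re, mul_im, conj_re, conj_im, one_re, one_im]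
  ring

lemma one_sub_conj_mul_ne_zero {a z : ℂ} (ha : ‖a‖ < 1) (hz : ‖z‖ ≤ 1) : 1 - conj a * z ≠ 0 := by
  refine sub_ne_zero.mpr fun h => ?_
  have : ‖conj a * z‖ < 1 := by
    rw [norm_mul, norm_conj]
    nlinarith [norm_nonneg a, norm_nonneg z]
  simp [← h] at this

lemma norm_blaschke_le_one {a z : ℂ} (ha : ‖a‖ < 1) (hz : ‖z‖ ≤ 1) : ‖blaschke a z‖ ≤ 1 := by
  have hnum : normSq (z - a) ≤ normSq (1 - conj a * z) := by
    have := normSq_one_sub_conj_mul_sub_normSq_sub a z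
    have hpos : 0 ≤ (1 - normSq a) * (1 - normSq z) := by
      rw [normSq_eq_norm_sq, normSq_eq_norm_sq]
      exact mul_nonneg (by nlinarith [norm_nonneg a]) (by nlinarith [norm_nonneg z])
    linarith
  rw [blaschke, norm_div, div_le_one (norm_pos_iff.mpr (one_sub_conj_mul_ne_zero ha hz))]
  simpa only [norm_def] using Real.sqrt_le_sqrt hnum

lemma norm_one_sub_conj_mul_of_norm_eq_one (a : ℂ) {z : ℂ} (hz : ‖z‖ = 1) :
    ‖1 - conj a * z‖ = ‖z - a‖ := by
  have := normSq_one_sub_conj_mul_sub_normSq_sub a z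
  rw [normSq_eq_norm_sq z, hz] at this
  simp only [norm_def]
  congr 1
  linarith

lemma differentiableAt_blaschke {a z : ℂ} (h : 1 - conj a * z ≠ 0) :
    DifferentiableAt ℂ (blaschke a) z :=
  (differentiableAt_id.sub_const a).div ((differentiableAt_id.const_mul _).const_sub 1) h

lemma hasDerivAt_blaschke_self {a : ℂ} (ha : ‖a‖ < 1) :
    HasDerivAt (blaschke a) (1 - conj a * a)⁻¹ a := by
  have h := one_sub_conj_mul_ne_zero ha ha.le
  refine (((hasDerivAt_id' a).sub_const a).div
    (((hasDerivAt_id' a).const_mul (conj a)).const_sub 1) h).congr_deriv ?_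
  rw [sub_self, zero_mul, sub_zero, one_mul, sq, ← div_div, div_self h, one_div]

lemma eq_blaschke_neg_of_blaschke_eq {a u z : ℂ} (ha : ‖a‖ < 1) (hu : ‖u‖ ≤ 1) (hz : ‖z‖ ≤ 1)
    (h : blaschke a u = z) : u = blaschke (-a) z := by
  have hu' := one_sub_conj_mul_ne_zero ha hu
  have hz' := one_sub_conj_mul_ne_zero (a := -a) (by simpa using ha) hz
  rw [blaschke, div_eq_iff hu'] at h
  rw [blaschke, eq_div_iff hz', map_neg]
  linear_combination h

theorem eqOn_blaschke_neg_of_hasDerivAt {g : ℂ → ℂ} {w : ℂ} (hw : ‖w‖ < 1)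
    (hg : DifferentiableOn ℂ g (ball 0 1)) (hmaps : MapsTo g (ball 0 1) (closedBall 0 1))
    (hg0 : g 0 = w) (hg' : HasDerivAt g (1 - conj w * w) 0) :
    EqOn g (blaschke (-w)) (ball 0 1) := by
  have hgle : ∀ z ∈ ball (0 : ℂ) 1, ‖g z‖ ≤ 1 := fun z hz => by simpa using hmaps hz
  set F := blaschke w ∘ g
  have hF : DifferentiableOn ℂ F (ball 0 1) := fun z hz =>
    ((differentiableAt_blaschke (one_sub_conj_mul_ne_zero hw (hgle z hz))).comp z
      (hg.differentiableAt (isOpen_ball.mem_nhds hz))).differentiableWithinAt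
  have hF0 : F 0 = 0 := by simp [F, hg0]
  have hFmaps : MapsTo F (ball 0 1) (closedBall (F 0) 1) := fun z hz => by
    rw [hF0, mem_closedBall_zero_iff]
    exact norm_blaschke_le_one hw (hgle z hz)
  -- `F` fixes `0` with `F' 0 = 1`, so Schwarz's lemma forces `F = id`.
  have hF' : HasDerivAt F 1 0 := by
    have := (hasDerivAt_blaschke_self hw).comp_of_eq 0 hg' hg0.symm
    rwa [inv_mul_cancel₀ (one_sub_conj_mul_ne_zero hw hw.le)] at this
  have hslope : ‖dslope F 0 0‖ = 1 / 1 := by simp [hF'.deriv]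
  intro z hz
  have hFz :=
    affine_of_mapsTo_ball_of_norm_dslope_eq_div hF hFmaps (mem_ball_self one_pos) hslope hz
  simp only [hF0, dslope_same, hF'.deriv, sub_zero, smul_eq_mul, mul_one, zero_add] at hFz
  exact eq_blaschke_neg_of_blaschke_eq hw (hgle z hz) (mem_closedBall_zero_iff.mp
    (ball_subset_closedBall hz)) hFz

end Complex

namespace Polynomial

open Complex

lemma hasDerivAt_eval_zero {𝕜 : Type*} [NontriviallyNormedField 𝕜] (p : 𝕜[X]) :
    HasDerivAt (fun z => p.eval z) (p.coeff 1) 0 := by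
  simpa [← coeff_zero_eq_eval_zero, coeff_derivative] using p.hasDerivAt 0

theorem eq_of_norm_eval_eq_on_sphere {P Q S : ℂ[X]} {r : ℂ} (hr : ‖r‖ < 1)
    (hQ : Q = (X - C r) * S) (hS : ∀ z : ℂ, ‖z‖ ≤ 1 → S.eval z ≠ 0)
    (hPQ : ∀ z : ℂ, ‖z‖ = 1 → ‖P.eval z‖ = ‖Q.eval z‖)
    (h0 : P.coeff 0 = Q.coeff 0) (h1 : P.coeff 1 = Q.coeff 1) : P = Q := by
  subst hQ
  set D : ℂ[X] := (1 - C (conj r) * X) * S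
  have hD : ∀ z : ℂ, ‖z‖ ≤ 1 → D.eval z ≠ 0 := fun z hz => by
    simpa [D] using mul_ne_zero (one_sub_conj_mul_ne_zero hr hz) (hS z hz)
  set g : ℂ → ℂ := fun z => P.eval z / D.eval z
  have hgdiff : ∀ z : ℂ, ‖z‖ ≤ 1 → DifferentiableAt ℂ g z := fun z hz =>
    P.differentiableAt.div D.differentiableAt (hD z hz)
  have hsphere : ∀ z : ℂ, ‖z‖ = 1 → ‖g z‖ ≤ 1 := fun z hz => by
    have : ‖P.eval z‖ = ‖D.eval z‖ := by
      simp only [hPQ z hz, D, eval_mul, eval_sub, eval_one, eval_X, eval_C, norm_mul,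
        norm_one_sub_conj_mul_of_norm_eq_one r hz]
    rw [norm_div, this, div_self (norm_ne_zero_iff.mpr (hD z hz.le))]
  have hmaps : MapsTo g (ball 0 1) (closedBall 0 1) := by
    have hcl : DiffContOnCl ℂ g (ball 0 1) := by
      refine DifferentiableOn.diffContOnCl ?_
      rw [closure_ball _ one_ne_zero]
      exact fun z hz => (hgdiff z (by simpa using hz)).differentiableWithinAt
    intro z hz
    rw [mem_closedBall_zero_iff]
    refine Complex.norm_le_of_forall_mem_frontier_norm_le isBounded_ball hcl ?_ (subset_closure hz)
    rw [frontier_ball _ one_ne_zero]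
    exact fun w hw => hsphere w (by simpa using hw)
  have hs0 : S.coeff 0 ≠ 0 := by simpa [coeff_zero_eq_eval_zero] using hS 0 (by simp)
  have hP0 : P.coeff 0 = -r * S.coeff 0 := by simp [h0]
  have hP1 : P.coeff 1 = S.coeff 0 - r * S.coeff 1 := by
    rw [h1, sub_mul, coeff_sub, coeff_X_mul, coeff_C_mul]
  have hD0 : D.coeff 0 = S.coeff 0 := by simp [D]
  have hD1 : D.coeff 1 = S.coeff 1 - conj r * S.coeff 0 := by
    rw [show D = S - C (conj r) * (X * S) by ring, coeff_sub, coeff_C_mul, coeff_X_mul]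
  have hg0 : g 0 = -r := by
    simp only [g, ← coeff_zero_eq_eval_zero, hP0, hD0]
    field_simp
  have hg' : HasDerivAt g (1 - conj (-r) * -r) 0 := by
    refine ((hasDerivAt_eval_zero P).div (hasDerivAt_eval_zero D) (hD 0 (by simp))).congr_deriv ?_
    simp only [← coeff_zero_eq_eval_zero, hP0, hP1, hD0, hD1, map_neg]
    field_simp
    ring
  have heq := eqOn_blaschke_neg_of_hasDerivAt (by simpa using hr)
    (fun z hz => (hgdiff z (by simpa using (mem_ball_zero_iff.mp hz).le)).differentiableWithinAt)
    hmaps hg0 hg'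
  refine eq_of_infinite_eval_eq _ _
    ((infinite_of_mem_nhds 0 (ball_mem_nhds 0 one_pos)).mono fun z hz => ?_)
  have hz1 : ‖z‖ ≤ 1 := (mem_ball_zero_iff.mp hz).le
  have hgz := heq hz
  simp only [g, neg_neg, blaschke] at hgz
  rw [div_eq_div_iff (hD z hz1) (one_sub_conj_mul_ne_zero hr hz1)] at hgz
  refine mul_left_cancel₀ (one_sub_conj_mul_ne_zero hr hz1) ?_
  simp only [D, eval_mul, eval_sub, eval_one, eval_X, eval_C] at hgz ⊢
  linear_combination hgz

lemma aeval_reflect {R K : Type*} [CommSemiring R] [Field K] [Algebra R K] {f : R[X]} {N : ℕ}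
    (hf : f.natDegree ≤ N) {x : K} (hx : x ≠ 0) :
    aeval x (reflect N f) = x ^ N * aeval x⁻¹ f := by
  have : Invertible x⁻¹ := invertibleOfNonzero (inv_ne_zero hx)
  have h := eval₂_reflect_mul_pow (algebraMap R K) x⁻¹ N f hf
  rw [invOf_eq_inv, inv_inv] at h
  rw [aeval_def, aeval_def, ← h, mul_left_comm, ← mul_pow, mul_inv_cancel₀ hx, one_pow, mul_one]

lemma norm_aeval_reflect_of_norm_eq_one {K : Type*} [RCLike K] {p : ℝ[X]} {N : ℕ}
    (hp : p.natDegree ≤ N) {z : K} (hz : ‖z‖ = 1) : ‖aeval z (reflect N p)‖ = ‖aeval z p‖ := by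
  rw [aeval_reflect hp (norm_ne_zero_iff.mp (hz ▸ one_ne_zero)), RCLike.inv_eq_conj hz,
    aeval_conj, norm_mul, norm_pow, hz, one_pow, one_mul, RCLike.norm_conj]

lemma reflect_X_sub_C_mul {R : Type*} [CommRing R] (a : R) {f : R[X]} {n : ℕ}
    (hf : f.natDegree ≤ n) : reflect (n + 1) ((X - C a) * f) = (1 - C a * X) * reflect n f := by
  rw [add_comm, reflect_mul _ _ (natDegree_X_sub_C_le a) hf, reflect_sub, reflect_one_X,
    reflect_C, pow_one]

lemma aeval_reflect_natDegree_ne_zero {p : ℝ[X]} (hp : ∀ w : ℂ, 1 ≤ ‖w‖ → aeval w p ≠ 0)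
    {z : ℂ} (hz : ‖z‖ ≤ 1) : aeval z (reflect p.natDegree p) ≠ 0 := by
  rcases eq_or_ne z 0 with rfl | hz0
  · have hp0 : p ≠ 0 := fun h => hp 1 (by simp) (by simp [h])
    simpa [← coeff_zero_eq_aeval_zero', coeff_reflect] using hp0
  · rw [aeval_reflect le_rfl hz0]
    refine mul_ne_zero (pow_ne_zero _ hz0) (hp _ ?_)
    rw [norm_inv]
    exact (one_le_inv₀ (norm_pos_iff.mpr hz0)).mpr hz

theorem reflect_eq_self_of_pisot_of_coeff_eq {p : ℝ[X]} {θ : ℝ} {d : ℕ} (hθ : 1 < θ)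
    (hdeg : p.natDegree = d) (hroot : p.IsRoot θ) (hsimple : p.derivative.eval θ ≠ 0)
    (hconj : ∀ z : ℂ, aeval z p = 0 → z ≠ θ → ‖z‖ < 1)
    (h0 : p.coeff 0 = p.coeff d) (h1 : p.coeff 1 = p.coeff (d - 1)) : reflect d p = p := by
  obtain ⟨R, hpR⟩ := dvd_iff_isRoot.mpr hroot
  have hRθ : R.eval θ ≠ 0 := by simpa [hpR, derivative_mul] using hsimple
  obtain rfl : d = R.natDegree + 1 := by
    rw [← hdeg, hpR, natDegree_mul (X_sub_C_ne_zero θ) (fun h => hRθ (by simp [h])),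
      natDegree_X_sub_C, add_comm]
  have hR : ∀ w : ℂ, 1 ≤ ‖w‖ → aeval w R ≠ 0 := by
    intro w hw hRw
    by_cases hwθ : w = θ
    · subst hwθ
      exact hRθ (Complex.ofReal_eq_zero.mp ((ofReal_eval R θ).trans hRw))
    · exact (hconj w (by simp [hpR, hRw]) hwθ).not_ge hw
  set S : ℝ[X] := C (-θ) * reflect R.natDegree R
  have hrefl : reflect (R.natDegree + 1) p = (X - C θ⁻¹) * S := by
    have hc : C θ⁻¹ * C θ = (1 : ℝ[X]) := by rw [← C_mul, inv_mul_cancel₀ (by positivity), C_1]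
    rw [hpR, reflect_X_sub_C_mul θ le_rfl, ← mul_assoc, C_neg]
    congr 1
    linear_combination -hc
  apply map_injective (algebraMap ℝ ℂ) (algebraMap ℝ ℂ).injective
  refine (eq_of_norm_eval_eq_on_sphere (r := ((θ⁻¹ : ℝ) : ℂ)) (S := S.map (algebraMap ℝ ℂ))
    ?_ ?_ ?_ ?_ ?_ ?_).symm
  · rw [Complex.norm_real, Real.norm_of_nonneg (by positivity)]
    exact inv_lt_one_of_one_lt₀ hθ
  · rw [hrefl, Polynomial.map_mul, Polynomial.map_sub, map_X, map_C]
    rfl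
  · intro z hz
    rw [eval_map_algebraMap, map_mul, aeval_C]
    exact mul_ne_zero (by simpa using (zero_lt_one.trans hθ).ne')
      (aeval_reflect_natDegree_ne_zero hR hz)
  · intro z hz
    simp only [eval_map_algebraMap]
    exact (norm_aeval_reflect_of_norm_eq_one hdeg.le hz).symm
  · rw [coeff_map, coeff_map, coeff_reflect, revAt_le (Nat.zero_le _), Nat.sub_zero, h0]
  · rw [coeff_map, coeff_map, coeff_reflect, revAt_le (by omega), h1]

end Polynomial

theorem stmt_9 (θ : ℝ) (hθ : IsPisot θ) (d : ℕ) (hd : (minpoly ℚ θ).natDegree = d)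
    (hnotrec : Polynomial.reflect d (minpoly ℚ θ) ≠ minpoly ℚ θ)
    (hconst : (minpoly ℚ θ).coeff 0 = 1) :
    (minpoly ℚ θ).coeff (d - 1) ≠ (minpoly ℚ θ).coeff 1 := by
  intro hEq
  obtain ⟨hθ1, hint, hconj⟩ := hθ
  have hintQ : IsIntegral ℚ θ := hint.tower_top
  have hmonic := minpoly.monic hintQ
  apply hnotrec
  apply map_injective (algebraMap ℚ ℝ) (algebraMap ℚ ℝ).injective
  rw [← reflect_map]
  refine reflect_eq_self_of_pisot_of_coeff_eq hθ1 (by rw [hmonic.natDegree_map, hd]) ?_ ?_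
    (fun z hz => hconj z (by rwa [aeval_map_algebraMap] at hz)) ?_ ?_
  · simp [IsRoot, eval_map_algebraMap]
  · rw [derivative_map, eval_map_algebraMap]
    exact (minpoly.irreducible hintQ).separable.aeval_derivative_ne_zero
      (minpoly.aeval ℚ θ)
  · simp [coeff_map, hconst, ← hd, hmonic.coeff_natDegree]
  · simp [coeff_map, hEq]
end
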